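/- Let K^{(1)}, …, K^{(M)} be symmetric PSD n×n matrices, and for β ∈ Δ^{M-1} let d_β(i,j) = sqrt(Σ_m β_m d_m(i,j)²), where d_m(i,j)² = K^{(m)}_{ii} + K^{(m)}_{jj} - 2K^{(m)}_{ij}. Then for all β, β' ∈ Δ^{M-1} and all i, j: |d_β(i,j) - d_{β'}(i,j)| ≤ sqrt(‖β - β'‖₁) · max_m sup_{i,j} d_m(i,j). -/

import Mathlib

open Real Finset

lemma sqrt_add_le' (a b : ℝ) (ha : 0 ≤ a) (hb : 0 ≤ b) :
    Real.sqrt (a + b) ≤ Real.sqrt a + Real.sqrt b := by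
  have h : Real.sqrt (a + b) ≤ Real.sqrt ((Real.sqrt a + Real.sqrt b) ^ 2) :=
    Real.sqrt_le_sqrt (by nlinarith [Real.sq_sqrt ha, Real.sq_sqrt hb, mul_nonneg (Real.sqrt_nonneg a) (Real.sqrt_nonneg b)])
  rwa [Real.sqrt_sq (by positivity)] at h

lemma abs_sqrt_sub_sqrt (a b : ℝ) (ha : 0 ≤ a) (hb : 0 ≤ b) :
    |Real.sqrt a - Real.sqrt b| ≤ Real.sqrt |a - b| := by
  rcases le_total b a with h | h
  · rw [abs_of_nonneg (sub_nonneg.mpr (Real.sqrt_le_sqrt h)),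
      abs_of_nonneg (sub_nonneg.mpr h), sub_le_iff_le_add]
    calc Real.sqrt a = Real.sqrt (b + (a - b)) := by ring_nf
      _ ≤ Real.sqrt b + Real.sqrt (a - b) := sqrt_add_le' _ _ hb (by linarith)
      _ = Real.sqrt (a - b) + Real.sqrt b := by ring
  · rw [abs_of_nonpos (sub_nonpos.mpr (Real.sqrt_le_sqrt h)),
      abs_of_nonpos (sub_nonpos.mpr h), neg_sub, neg_sub, sub_le_iff_le_add]
    calc Real.sqrt b = Real.sqrt (a + (b - a)) := by ring_nf
      _ ≤ Real.sqrt a + Real.sqrt (b - a) := sqrt_add_le' _ _ ha (by linarith)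
      _ = Real.sqrt (b - a) + Real.sqrt a := by ring

/-- Lipschitz continuity of the blended kernel-induced distance in the simplex
weights: `|d_β(i,j) - d_{β'}(i,j)| ≤ sqrt(‖β-β'‖₁) · max_m sup_{i,j} d_m(i,j)`. -/
theorem blended_distance_lipschitz_in_weights (n M : ℕ) (hn : 0 < n) (hM : 0 < M)
    (K : Fin M → Matrix (Fin n) (Fin n) ℝ) (hK : ∀ m, (K m).PosSemidef)
    (dsq : Fin M → Fin n → Fin n → ℝ)
    (hdsq : ∀ m i j, dsq m i j = K m i i + K m j j - 2 * K m i j)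
    (d : Fin M → Fin n → Fin n → ℝ)
    (hd : ∀ m i j, d m i j = Real.sqrt (dsq m i j))
    (dβ : (Fin M → ℝ) → Fin n → Fin n → ℝ)
    (hdβ : ∀ β i j, dβ β i j = Real.sqrt (∑ m, β m * dsq m i j))
    (β β' : Fin M → ℝ)
    (hβ : ∀ m, 0 ≤ β m) (hβsum : (∑ m, β m) = 1)
    (hβ' : ∀ m, 0 ≤ β' m) (hβ'sum : (∑ m, β' m) = 1) :
    ∀ i j, |dβ β i j - dβ β' i j| ≤
      Real.sqrt (∑ m, |β m - β' m|) *
        (Finset.univ.sup' (Finset.univ_nonempty_iff.mpr ⟨⟨0, hM⟩⟩) fun m : Fin M =>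
          Finset.univ.sup' (Finset.univ_nonempty_iff.mpr ⟨(⟨0, hn⟩, ⟨0, hn⟩)⟩) fun p : Fin n × Fin n =>
            d m p.1 p.2) := by
  -- dsq is nonnegative
  have hdsq0 : ∀ m i j, 0 ≤ dsq m i j := by
    intro m i j
    have h := (Matrix.posSemidef_iff_dotProduct_mulVec.mp (hK m)).2 (Pi.single i (1:ℝ) - Pi.single j 1)
    have hij : K m j i = K m i j := by
      have := congrFun (congrFun (hK m).1 j) i
      simpa [Matrix.transpose_apply] using this.symm
    simp only [star_trivial, Matrix.mulVec_sub, dotProduct_sub, sub_dotProduct,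
      Matrix.mulVec_single, single_dotProduct, dotProduct_single, mul_one,
      one_mul, MulOpposite.op_one, one_smul, Matrix.col_apply] at h
    rw [hdsq]
    linarith [hij ▸ h]
  set D := (Finset.univ.sup' (Finset.univ_nonempty_iff.mpr ⟨⟨0, hM⟩⟩) fun m : Fin M =>
          Finset.univ.sup' (Finset.univ_nonempty_iff.mpr ⟨(⟨0, hn⟩, ⟨0, hn⟩)⟩)
            fun p : Fin n × Fin n => d m p.1 p.2) with hD
  intro i j
  have hdle : ∀ m, d m i j ≤ D := by
    intro m
    have h1 : d m i j ≤ (Finset.univ : Finset (Fin n × Fin n)).sup'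
        (Finset.univ_nonempty_iff.mpr ⟨(⟨0, hn⟩, ⟨0, hn⟩)⟩)
        (fun p : Fin n × Fin n => d m p.1 p.2) :=
      Finset.le_sup' (fun p : Fin n × Fin n => d m p.1 p.2)
        (Finset.mem_univ ((i, j) : Fin n × Fin n))
    have h2 := Finset.le_sup'
      (fun m : Fin M => (Finset.univ : Finset (Fin n × Fin n)).sup'
        (Finset.univ_nonempty_iff.mpr ⟨(⟨0, hn⟩, ⟨0, hn⟩)⟩)
        (fun p : Fin n × Fin n => d m p.1 p.2)) (Finset.mem_univ m)
    exact le_trans h1 h2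
  have hD0 : 0 ≤ D := le_trans (by rw [hd]; positivity) (hdle ⟨0, hM⟩)
  have hdsqle : ∀ m, dsq m i j ≤ D ^ 2 := by
    intro m
    have h1 : d m i j ^ 2 = dsq m i j := by rw [hd]; exact Real.sq_sqrt (hdsq0 m i j)
    have h2 : d m i j ^ 2 ≤ D ^ 2 := by
      apply pow_le_pow_left₀ (by rw [hd]; positivity) (hdle m)
    linarith
  have hs1 : 0 ≤ ∑ m, β m * dsq m i j :=
    Finset.sum_nonneg fun m _ => mul_nonneg (hβ m) (hdsq0 m i j)
  have hs2 : 0 ≤ ∑ m, β' m * dsq m i j :=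
    Finset.sum_nonneg fun m _ => mul_nonneg (hβ' m) (hdsq0 m i j)
  rw [hdβ, hdβ]
  calc |Real.sqrt (∑ m, β m * dsq m i j) - Real.sqrt (∑ m, β' m * dsq m i j)|
      ≤ Real.sqrt |(∑ m, β m * dsq m i j) - (∑ m, β' m * dsq m i j)| :=
        abs_sqrt_sub_sqrt _ _ hs1 hs2
    _ ≤ Real.sqrt ((∑ m, |β m - β' m|) * D ^ 2) := by
        apply Real.sqrt_le_sqrt
        rw [← Finset.sum_sub_distrib, Finset.sum_mul]
        calc |∑ m, (β m * dsq m i j - β' m * dsq m i j)|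
            ≤ ∑ m, |β m * dsq m i j - β' m * dsq m i j| := Finset.abs_sum_le_sum_abs _ _
          _ ≤ ∑ m, |β m - β' m| * D ^ 2 := by
              apply Finset.sum_le_sum
              intro m _
              rw [← sub_mul, abs_mul, abs_of_nonneg (hdsq0 m i j)]
              exact mul_le_mul_of_nonneg_left (hdsqle m) (abs_nonneg _)
    _ = Real.sqrt (∑ m, |β m - β' m|) * D := by
        rw [Real.sqrt_mul (Finset.sum_nonneg fun m _ => abs_nonneg _),
          Real.sqrt_sq hD0]
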